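/- arXiv:2510.27076 — 8 statements merged into one kernel-verified Lean document; each statement's English description precedes it below -/
import Mathlib

section
/- The minimal Q-forcing matrix is determined by consecutive windows: an entry (i,j) of an m×n matrix is forced to be 1 (i.e., equals 1 in the unique minimal Q-forcing matrix) if and only if it is forced by some s×t submatrix consisting of s consecutive rows and t consecutive columns. -/
open Finset

/-- Number of 1-entries of a (0,1)-matrix. -/
def onesCount {m n : ℕ} (A : Fin m → Fin n → Bool) : ℕ :=
  (Finset.univ.filter (fun p : Fin m × Fin n => A p.1 p.2 = true)).card

/-- Number of 0-entries of a (0,1)-matrix. -/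
def zerosCount {m n : ℕ} (A : Fin m → Fin n → Bool) : ℕ :=
  (Finset.univ.filter (fun p : Fin m × Fin n => A p.1 p.2 = false)).card

/-- `A` is `Q`-forcing: every s×t submatrix of `A` is entrywise ≥ Q. -/
def IsForcing {m n s t : ℕ} (A : Fin m → Fin n → Bool) (Q : Fin s → Fin t → Bool) : Prop :=
  ∀ (r : Fin s → Fin m) (c : Fin t → Fin n), StrictMono r → StrictMono c →
    ∀ y x, Q y x = true → A (r y) (c x) = true

/-- Minimum number of 1-entries of an m×n Q-forcing matrix. -/
noncomputable def mMin (m n : ℕ) {s t : ℕ} (Q : Fin s → Fin t → Bool) : ℕ :=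
  sInf {v | ∃ A : Fin m → Fin n → Bool, IsForcing A Q ∧ onesCount A = v}

/-- `A` is strongly `Q`-forcing: every 1-entry lies in a submatrix exactly equal to `Q`. -/
def IsStronglyForcing {m n s t : ℕ} (A : Fin m → Fin n → Bool)
    (Q : Fin s → Fin t → Bool) : Prop :=
  ∀ i j, A i j = true → ∃ (r : Fin s → Fin m) (c : Fin t → Fin n),
    StrictMono r ∧ StrictMono c ∧ (∀ y x, A (r y) (c x) = Q y x) ∧
    ∃ y x, r y = i ∧ c x = j

/-- Maximum number of 1-entries of an m×n strongly Q-forcing matrix. -/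
noncomputable def MMax (m n : ℕ) {s t : ℕ} (Q : Fin s → Fin t → Bool) : ℕ :=
  sSup {v | ∃ A : Fin m → Fin n → Bool, IsStronglyForcing A Q ∧ onesCount A = v}

/-- Corner sets of 0-positions with no 1-entry weakly in the given quadrant direction. -/
def cornerNW {s t : ℕ} (Q : Fin s → Fin t → Bool) : Finset (Fin s × Fin t) :=
  Finset.univ.filter (fun p => ∀ i' j', i' ≤ p.1 → j' ≤ p.2 → Q i' j' = false)

def cornerNE {s t : ℕ} (Q : Fin s → Fin t → Bool) : Finset (Fin s × Fin t) :=
  Finset.univ.filter (fun p => ∀ i' j', i' ≤ p.1 → p.2 ≤ j' → Q i' j' = false)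

def cornerSW {s t : ℕ} (Q : Fin s → Fin t → Bool) : Finset (Fin s × Fin t) :=
  Finset.univ.filter (fun p => ∀ i' j', p.1 ≤ i' → j' ≤ p.2 → Q i' j' = false)

def cornerSE {s t : ℕ} (Q : Fin s → Fin t → Bool) : Finset (Fin s × Fin t) :=
  Finset.univ.filter (fun p => ∀ i' j', p.1 ≤ i' → p.2 ≤ j' → Q i' j' = false)

/-- `P` is a permutation matrix. -/
def IsPermMatrix {k : ℕ} (P : Fin k → Fin k → Bool) : Prop :=
  ∃ σ : Equiv.Perm (Fin k), ∀ i j, P i j = decide (σ i = j)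

lemma auxMono {s m : ℕ} {f : Fin s → Fin m} (hf : StrictMono f) :
    ∀ (k : ℕ) (a b : Fin s), (b : ℕ) = a + k → (f a : ℕ) + k ≤ f b := by
  intro k
  induction k with
  | zero =>
    intro a b h
    have : a = b := Fin.ext (by omega)
    simp [this]
  | succ k ih =>
    intro a b h
    have hb' : (a : ℕ) + k < s := by have := b.isLt; omega
    set b' : Fin s := ⟨a + k, hb'⟩ with hb'def
    have h1 : (f a : ℕ) + k ≤ f b' := ih a b' rfl
    have h2 : f b' < f b := hf (by simp [Fin.lt_def, hb'def]; omega)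
    have := Fin.lt_def.mp h2
    omega

theorem stmt2 (m n s t : ℕ) (hm : s ≤ m) (hn : t ≤ n) (Q : Fin s → Fin t → Bool)
    (i : Fin m) (j : Fin n) :
    (∃ (r : Fin s → Fin m) (c : Fin t → Fin n) (y : Fin s) (x : Fin t),
        StrictMono r ∧ StrictMono c ∧ Q y x = true ∧ r y = i ∧ c x = j) ↔
    (∃ (a b : ℕ) (y : Fin s) (x : Fin t),
        a + s ≤ m ∧ b + t ≤ n ∧ Q y x = true ∧ (i : ℕ) = a + (y : ℕ) ∧ (j : ℕ) = b + (x : ℕ)) := by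
  constructor
  · rintro ⟨r, c, y, x, hr, hc, hQ, hry, hcx⟩
    have hspos : 0 < s := y.pos
    have htpos : 0 < t := x.pos
    have h1 : (y : ℕ) ≤ (r y : ℕ) := by
      have := auxMono hr y ⟨0, hspos⟩ y (by simp)
      omega
    have h2 : (r y : ℕ) + (s - 1 - y) ≤ (r ⟨s - 1, by omega⟩ : ℕ) := by
      have := auxMono hr (s - 1 - y) y ⟨s - 1, by omega⟩ (by simp; omega)
      omega
    have h3 : (r ⟨s - 1, by omega⟩ : ℕ) < m := Fin.isLt _
    have h1' : (x : ℕ) ≤ (c x : ℕ) := by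
      have := auxMono hc x ⟨0, htpos⟩ x (by simp)
      omega
    have h2' : (c x : ℕ) + (t - 1 - x) ≤ (c ⟨t - 1, by omega⟩ : ℕ) := by
      have := auxMono hc (t - 1 - x) x ⟨t - 1, by omega⟩ (by simp; omega)
      omega
    have h3' : (c ⟨t - 1, by omega⟩ : ℕ) < n := Fin.isLt _
    refine ⟨(i : ℕ) - y, (j : ℕ) - x, y, x, ?_, ?_, hQ, ?_, ?_⟩ <;>
      · subst hry hcx
        have := y.isLt; have := x.isLt
        omega
  · rintro ⟨a, b, y, x, ha, hb, hQ, hi, hj⟩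
    refine ⟨fun z => ⟨a + z, by have := z.isLt; omega⟩,
            fun z => ⟨b + z, by have := z.isLt; omega⟩, y, x, ?_, ?_, hQ, ?_, ?_⟩
    · intro u v huv
      simp only [Fin.lt_def] at huv ⊢
      omega
    · intro u v huv
      simp only [Fin.lt_def] at huv ⊢
      omega
    · exact Fin.ext (by simp [hi])
    · exact Fin.ext (by simp [hj])
end

section
/- Let Q be an s×t (0,1)-matrix whose first row, last row, first column, and last column each contain at least one 1-entry, and let m ≥ 2s, n ≥ 2t. Then m(m,n,Q) = mn − (|NW(Q)| + |SW(Q)| + |NE(Q)| + |SE(Q)|). -/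
/-!
Entry `(y, x)` of `Q` can be placed on entry `(i, j)` of an `m × n` matrix by some `s × t`
submatrix exactly when `y ≤ i ≤ m - s + y` and `x ≤ j ≤ n - t + x`. Hence the matrix whose
`1`-entries are the positions on which some `1`-entry of `Q` can be placed is `Q`-forcing and
lies entrywise below every `Q`-forcing matrix, so `m(m, n, Q)` is its number of `1`-entries.
Because `Q` has `1`-entries in its first and last rows and columns, every row of index in
`[s, m - s)` and every column of index in `[t, n - t)` of this matrix is full of `1`s; as
`m ≥ 2s` and `n ≥ 2t`, the `0`-entries therefore lie in the four disjoint `s × t` corner blocks,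
where they are exactly the copies of `NW(Q)`, `NE(Q)`, `SW(Q)` and `SE(Q)`.
-/

open Finset

def FitsAt {s m : ℕ} (y : Fin s) (i : Fin m) : Prop :=
  (y : ℕ) ≤ i ∧ (i : ℕ) + s ≤ m + y

section FitsAt

variable {s m : ℕ}

instance (y : Fin s) (i : Fin m) : Decidable (FitsAt y i) :=
  inferInstanceAs (Decidable (_ ∧ _))

theorem fitsAt_of_strictMono {r : Fin s → Fin m} (hr : StrictMono r) (y : Fin s) :
    FitsAt y (r y) := by
  have hIic := card_le_card_of_injOn (s := Iic y) (t := Iic (r y)) r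
    (fun z hz => mem_Iic.mpr (hr.monotone (mem_Iic.mp hz))) hr.injective.injOn
  have hIci := card_le_card_of_injOn (s := Ici y) (t := Ici (r y)) r
    (fun z hz => mem_Ici.mpr (hr.monotone (mem_Ici.mp hz))) hr.injective.injOn
  simp only [Fin.card_Iic, Fin.card_Ici] at hIic hIci
  have := (r y).isLt
  exact ⟨by omega, by omega⟩

theorem exists_strictMono_apply_eq {y : Fin s} {i : Fin m} (h : FitsAt y i) :
    ∃ r : Fin s → Fin m, StrictMono r ∧ r y = i := by
  obtain ⟨h₁, h₂⟩ := h
  refine ⟨fun z => ⟨i - y + z, by omega⟩, fun a b hab => ?_, Fin.ext (Nat.sub_add_cancel h₁)⟩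
  simp only [Fin.mk_lt_mk]
  exact Nat.add_lt_add_left hab _

end FitsAt

def minForcing (m n : ℕ) {s t : ℕ} (Q : Fin s → Fin t → Bool) : Fin m → Fin n → Bool :=
  fun i j => decide (∃ y x, Q y x = true ∧ FitsAt y i ∧ FitsAt x j)

section minForcing

variable {m n s t : ℕ} {Q : Fin s → Fin t → Bool}

theorem minForcing_eq_false_iff {i : Fin m} {j : Fin n} :
    minForcing m n Q i j = false ↔ ∀ y x, FitsAt y i → FitsAt x j → Q y x = false := by
  simp only [minForcing, decide_eq_false_iff_not, not_exists, not_and]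
  exact forall₂_congr fun y x => by cases Q y x <;> simp

theorem minForcing_flip (i : Fin m) (j : Fin n) :
    minForcing n m (flip Q) j i = minForcing m n Q i j := by
  simp only [minForcing]
  exact Bool.decide_congr ⟨fun ⟨x, y, h, hx, hy⟩ => ⟨y, x, h, hy, hx⟩,
    fun ⟨y, x, h, hy, hx⟩ => ⟨x, y, h, hx, hy⟩⟩

theorem isForcing_minForcing : IsForcing (minForcing m n Q) Q := by
  intro r c hr hc y x hQ
  exact decide_eq_true ⟨y, x, hQ, fitsAt_of_strictMono hr y, fitsAt_of_strictMono hc x⟩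

theorem IsForcing.minForcing_le {A : Fin m → Fin n → Bool} (hA : IsForcing A Q) {i : Fin m}
    {j : Fin n} (h : minForcing m n Q i j = true) : A i j = true := by
  obtain ⟨y, x, hQ, hy, hx⟩ := of_decide_eq_true (p := ∃ y x, _) h
  obtain ⟨r, hr, rfl⟩ := exists_strictMono_apply_eq hy
  obtain ⟨c, hc, rfl⟩ := exists_strictMono_apply_eq hx
  exact hA r c hr hc y x hQ

theorem onesCount_le_onesCount {A B : Fin m → Fin n → Bool}
    (h : ∀ i j, A i j = true → B i j = true) : onesCount A ≤ onesCount B :=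
  card_le_card (monotone_filter_right _ fun p _ => h p.1 p.2)

theorem mMin_eq_onesCount_minForcing : mMin m n Q = onesCount (minForcing m n Q) :=
  IsLeast.csInf_eq ⟨⟨_, isForcing_minForcing, rfl⟩, by
    rintro _ ⟨A, hA, rfl⟩
    exact onesCount_le_onesCount fun i j => hA.minForcing_le⟩

end minForcing

theorem onesCount_add_zerosCount {m n : ℕ} (A : Fin m → Fin n → Bool) :
    onesCount A + zerosCount A = m * n := by
  simpa [onesCount, zerosCount, Bool.not_eq_true] using
    card_filter_add_card_filter_not (s := univ) (fun p : Fin m × Fin n => A p.1 p.2 = true)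

def border {s m : ℕ} (h : 2 * s ≤ m) : Fin s ⊕ Fin s → Fin m
  | .inl a => ⟨a, by omega⟩
  | .inr a => ⟨m - s + a, by omega⟩

section border

variable {s m : ℕ} (h : 2 * s ≤ m)

theorem border_injective : Function.Injective (border h) := by
  rintro (a | a) (b | b) hab <;>
    simp only [border, Sum.inl.injEq, Sum.inr.injEq, reduceCtorEq, Fin.ext_iff] at hab ⊢ <;>
    omega

@[simp]
theorem fitsAt_border_inl (y a : Fin s) : FitsAt y (border h (.inl a)) ↔ y ≤ a := by
  simp only [FitsAt, border, Fin.le_def]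
  omega

@[simp]
theorem fitsAt_border_inr (y a : Fin s) : FitsAt y (border h (.inr a)) ↔ a ≤ y := by
  simp only [FitsAt, border, Fin.le_def]
  omega

theorem fitsAt_of_notMem_range_border {i : Fin m} (hi : i ∉ Set.range (border h)) (y : Fin s) :
    FitsAt y i := by
  have hlo : ¬ (i : ℕ) < s := fun hlt => hi ⟨.inl ⟨i, hlt⟩, rfl⟩
  have hhi : ¬ m ≤ i + s := fun hle =>
    hi ⟨.inr ⟨i - (m - s), by omega⟩, Fin.ext (by simp only [border]; omega)⟩
  constructor <;> omega

end border

section count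

variable {m n s t : ℕ} {Q : Fin s → Fin t → Bool}

theorem row_mem_range_border_of_minForcing_eq_false (hm : 2 * s ≤ m) (hn : 2 * t ≤ n)
    (hcol1 : ∃ (i : Fin s) (j : Fin t), (j : ℕ) = 0 ∧ Q i j = true)
    (hcollast : ∃ (i : Fin s) (j : Fin t), (j : ℕ) = t - 1 ∧ Q i j = true)
    {i : Fin m} {j : Fin n} (h : minForcing m n Q i j = false) : i ∈ Set.range (border hm) := by
  by_contra hi
  obtain ⟨y₀, x₀, hx₀, hQ₀⟩ := hcol1
  obtain ⟨y₁, x₁, hx₁, hQ₁⟩ := hcollast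
  rw [minForcing_eq_false_iff] at h
  by_cases hj : (j : ℕ) + t ≤ n
  · exact Bool.false_ne_true <|
      (h y₀ x₀ (fitsAt_of_notMem_range_border hm hi y₀) ⟨by omega, by omega⟩).symm.trans hQ₀
  · exact Bool.false_ne_true <|
      (h y₁ x₁ (fitsAt_of_notMem_range_border hm hi y₁) ⟨by omega, by omega⟩).symm.trans hQ₁

theorem col_mem_range_border_of_minForcing_eq_false (hm : 2 * s ≤ m) (hn : 2 * t ≤ n)
    (hrow1 : ∃ (i : Fin s) (j : Fin t), (i : ℕ) = 0 ∧ Q i j = true)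
    (hrowlast : ∃ (i : Fin s) (j : Fin t), (i : ℕ) = s - 1 ∧ Q i j = true)
    {i : Fin m} {j : Fin n} (h : minForcing m n Q i j = false) : j ∈ Set.range (border hn) := by
  obtain ⟨y₀, x₀, hy₀, hQ₀⟩ := hrow1
  obtain ⟨y₁, x₁, hy₁, hQ₁⟩ := hrowlast
  rw [← minForcing_flip] at h
  exact row_mem_range_border_of_minForcing_eq_false hn hm ⟨x₀, y₀, hy₀, hQ₀⟩ ⟨x₁, y₁, hy₁, hQ₁⟩ h

theorem zerosCount_minForcing (hm : 2 * s ≤ m) (hn : 2 * t ≤ n)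
    (hrow1 : ∃ (i : Fin s) (j : Fin t), (i : ℕ) = 0 ∧ Q i j = true)
    (hrowlast : ∃ (i : Fin s) (j : Fin t), (i : ℕ) = s - 1 ∧ Q i j = true)
    (hcol1 : ∃ (i : Fin s) (j : Fin t), (j : ℕ) = 0 ∧ Q i j = true)
    (hcollast : ∃ (i : Fin s) (j : Fin t), (j : ℕ) = t - 1 ∧ Q i j = true) :
    zerosCount (minForcing m n Q) =
      #(cornerNW Q) + #(cornerSW Q) + #(cornerNE Q) + #(cornerSE Q) := by
  let Φ : (Fin s ⊕ Fin s) × (Fin t ⊕ Fin t) ↪ Fin m × Fin n :=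
    ⟨Prod.map (border hm) (border hn), (border_injective hm).prodMap (border_injective hn)⟩
  have hzeros : univ.filter (fun p : Fin m × Fin n => minForcing m n Q p.1 p.2 = false) =
      (univ.filter fun u => minForcing m n Q (Φ u).1 (Φ u).2 = false).map Φ := by
    ext p
    simp only [mem_filter, mem_univ, true_and, mem_map]
    constructor
    · intro h
      obtain ⟨u, hu⟩ := row_mem_range_border_of_minForcing_eq_false hm hn hcol1 hcollast h
      obtain ⟨v, hv⟩ := col_mem_range_border_of_minForcing_eq_false hm hn hrow1 hrowlast h
      have hp : Φ (u, v) = p := Prod.ext hu hv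
      exact ⟨(u, v), hp ▸ h, hp⟩
    · rintro ⟨u, h, rfl⟩
      exact h
  rw [zerosCount, hzeros, card_map]
  simp only [card_filter, Fintype.sum_prod_type, Fintype.sum_sum_type, cornerNW, cornerSW,
    cornerNE, cornerSE, Φ, Function.Embedding.coeFn_mk, Prod.map_fst, Prod.map_snd,
    minForcing_eq_false_iff, fitsAt_border_inl, fitsAt_border_inr, sum_add_distrib]
  ring

end count

theorem stmt6 (m n s t : ℕ) (hm : 2 * s ≤ m) (hn : 2 * t ≤ n)
    (Q : Fin s → Fin t → Bool)
    (hrow1 : ∃ (i : Fin s) (j : Fin t), (i : ℕ) = 0 ∧ Q i j = true)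
    (hrowlast : ∃ (i : Fin s) (j : Fin t), (i : ℕ) = s - 1 ∧ Q i j = true)
    (hcol1 : ∃ (i : Fin s) (j : Fin t), (j : ℕ) = 0 ∧ Q i j = true)
    (hcollast : ∃ (i : Fin s) (j : Fin t), (j : ℕ) = t - 1 ∧ Q i j = true) :
    mMin m n Q =
      m * n - ((cornerNW Q).card + (cornerSW Q).card + (cornerNE Q).card + (cornerSE Q).card) := by
  have hcount := onesCount_add_zerosCount (minForcing m n Q)
  rw [zerosCount_minForcing hm hn hrow1 hrowlast hcol1 hcollast] at hcount
  rw [mMin_eq_onesCount_minForcing]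
  omega
end

section
/- Let n ≥ 2k and let P be a k×k permutation matrix. Then m(n,P) ≥ n² − k(k−1), with equality if and only if P is the identity matrix I_k or the anti-diagonal (Hankel) identity matrix H_k. -/
open Finset

/-!
A matrix is `P_σ`-forcing iff it has a 1 at every entry `(i, j)` where some 1-entry `(y, σ y)` of
`P_σ` can land under a `k × k` submatrix. A strictly increasing `Fin k → Fin n` moves `y` up by at
most `n - k`, and consecutive rows and columns realise every such shift, so this happens iff
`y ≤ i ≤ y + n - k` and `σ y ≤ j ≤ σ y + n - k`; these forced entries form the minimum forcing
matrix. In row `i` the admissible `y` form an interval `Y i`, and as `2k ≤ n` the forced entries of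
that row are the run from `min σ(Y i)` to `max σ(Y i) + n - k`, of length at least
`|Y i| + n - k`, with equality iff `σ(Y i)` is an interval. Double counting gives
`∑ |Y i| = k (n - k + 1)`, whence the bound `n² - k (k - 1)`.

In the equality case every `σ {0, …, y}` is an interval (rows `i < k`), and so is `σ {1, …, k - 1}`
(row `n - k + 1`). The latter puts `σ 0` at an end of `{0, …, k - 1}`, and then the intervals must
grow away from that end one step at a time, so `σ` is the identity or the reversal.
-/

/-- `y ≤ i ≤ y + (n - k)`, written without truncated subtraction: row `y` of a `k × k` pattern
can occupy row `i` of an `n × n` matrix. -/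
def Fits (n k : ℕ) (y : Fin k) (i : Fin n) : Prop :=
  (y : ℕ) ≤ i ∧ (i : ℕ) + k ≤ n + y

instance (n k : ℕ) (y : Fin k) (i : Fin n) : Decidable (Fits n k y i) :=
  inferInstanceAs (Decidable (_ ∧ _))

theorem StrictMono.fits {n k : ℕ} {r : Fin k → Fin n} (hr : StrictMono r) (y : Fin k) :
    Fits n k y (r y) := by
  have hIic : #(Iic y) ≤ #(Iic (r y)) :=
    card_le_card_of_injOn r (fun z hz => by simpa using hr.monotone (by simpa using hz))
      hr.injective.injOn
  have hIci : #(Ici y) ≤ #(Ici (r y)) :=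
    card_le_card_of_injOn r (fun z hz => by simpa using hr.monotone (by simpa using hz))
      hr.injective.injOn
  simp only [Fin.card_Iic, Fin.card_Ici] at hIic hIci
  have := (r y).isLt
  exact ⟨by omega, by omega⟩

theorem Fits.exists_strictMono {n k : ℕ} {y : Fin k} {i : Fin n} (h : Fits n k y i) :
    ∃ r : Fin k → Fin n, StrictMono r ∧ r y = i := by
  obtain ⟨hyi, hin⟩ := h
  refine ⟨fun t => ⟨i - y + t, by have := t.isLt; omega⟩, fun a b hab => ?_, Fin.ext ?_⟩
  · simp only [Fin.lt_def] at hab ⊢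
    omega
  · dsimp only
    omega

def permMatrix {k : ℕ} (σ : Equiv.Perm (Fin k)) : Fin k → Fin k → Bool :=
  fun i j => decide (σ i = j)

theorem permMatrix_injective {k : ℕ} : Function.Injective (permMatrix (k := k)) := by
  intro σ τ h
  refine Equiv.ext fun i => ?_
  simpa [permMatrix, eq_comm] using congrFun (congrFun h i) (σ i)

theorem permMatrix_one {k : ℕ} : permMatrix (1 : Equiv.Perm (Fin k)) = fun i j => decide (i = j) :=
  rfl

theorem permMatrix_revPerm {k : ℕ} :
    permMatrix (Fin.revPerm : Equiv.Perm (Fin k)) =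
      fun (i j : Fin k) => decide ((i : ℕ) + (j : ℕ) = k - 1) := by
  funext i j
  simp only [permMatrix, Fin.revPerm_apply, Fin.ext_iff, Fin.val_rev]
  have := i.isLt
  exact decide_eq_decide.2 (by omega)

def forcedMatrix (n k : ℕ) (σ : Equiv.Perm (Fin k)) : Fin n → Fin n → Bool :=
  fun i j => decide (∃ y, Fits n k y i ∧ Fits n k (σ y) j)

section Forcing

variable {n k : ℕ} {σ : Equiv.Perm (Fin k)}

theorem isForcing_permMatrix_iff {A : Fin n → Fin n → Bool} :
    IsForcing A (permMatrix σ) ↔ ∀ i j, forcedMatrix n k σ i j = true → A i j = true := by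
  constructor
  · intro hA i j h
    obtain ⟨y, hi, hj⟩ := of_decide_eq_true h
    obtain ⟨r, hr, rfl⟩ := hi.exists_strictMono
    obtain ⟨c, hc, rfl⟩ := hj.exists_strictMono
    exact hA r c hr hc y (σ y) (decide_eq_true rfl)
  · rintro h r c hr hc y x hyx
    obtain rfl : σ y = x := of_decide_eq_true hyx
    exact h _ _ (decide_eq_true ⟨y, hr.fits y, hc.fits (σ y)⟩)

theorem onesCount_mono {A B : Fin n → Fin n → Bool} (h : ∀ i j, A i j = true → B i j = true) :
    onesCount A ≤ onesCount B :=
  card_le_card (monotone_filter_right _ fun p _ => h p.1 p.2)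

theorem mMin_permMatrix : mMin n n (permMatrix σ) = onesCount (forcedMatrix n k σ) := by
  have hmem : onesCount (forcedMatrix n k σ) ∈
      {v | ∃ A, IsForcing A (permMatrix σ) ∧ onesCount A = v} :=
    ⟨_, isForcing_permMatrix_iff.2 fun _ _ h => h, rfl⟩
  refine le_antisymm (Nat.sInf_le hmem) (le_csInf ⟨_, hmem⟩ ?_)
  rintro _ ⟨A, hA, rfl⟩
  exact onesCount_mono (isForcing_permMatrix_iff.1 hA)

end Forcing

theorem onesCount_eq_sum_card_row {m n : ℕ} (A : Fin m → Fin n → Bool) :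
    onesCount A = ∑ i, #{j | A i j = true} := by
  simp only [onesCount, card_filter]
  exact Fintype.sum_prod_type _

theorem Fin.card_le_max'_add_one_sub_min' {k : ℕ} (T : Finset (Fin k)) (hT : T.Nonempty) :
    #T ≤ T.max' hT + 1 - T.min' hT := by
  rw [← Fin.card_Icc]
  exact card_le_card fun x hx => mem_Icc.2 ⟨T.min'_le x hx, T.le_max' x hx⟩

theorem Fin.card_eq_max'_add_one_sub_min'_iff_ordConnected {k : ℕ} (T : Finset (Fin k))
    (hT : T.Nonempty) :
    #T = T.max' hT + 1 - T.min' hT ↔ (T : Set (Fin k)).OrdConnected := by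
  have hsub : T ⊆ Icc (T.min' hT) (T.max' hT) := fun x hx =>
    mem_Icc.2 ⟨T.min'_le x hx, T.le_max' x hx⟩
  rw [← Fin.card_Icc]
  constructor
  · intro h
    rw [eq_of_subset_of_card_le hsub h.ge, coe_Icc]
    exact Set.ordConnected_Icc
  · intro h
    refine congrArg card (hsub.antisymm fun x hx => ?_)
    exact h.out (T.min'_mem hT) (T.max'_mem hT) (by simpa using hx)

theorem card_filter_exists_fits {n k : ℕ} (hkn : k ≤ n) (hn : 2 * k ≤ n + 2)
    (T : Finset (Fin k)) (hT : T.Nonempty) :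
    #{j : Fin n | ∃ x ∈ T, Fits n k x j} = T.max' hT + (n + 1 - k) - T.min' hT := by
  have hM := (T.max' hT).isLt
  have hmM : T.min' hT ≤ T.max' hT := T.min'_le _ (T.max'_mem hT)
  rw [Fin.le_def] at hmM
  -- the windows of the two extreme rows `min' T` and `max' T` already overlap
  have hcover : ({j : Fin n | ∃ x ∈ T, Fits n k x j} : Finset (Fin n)) =
      Icc ⟨T.min' hT, by omega⟩ ⟨T.max' hT + n - k, by omega⟩ := by
    ext j
    simp only [mem_filter, mem_univ, true_and]
    simp only [mem_Icc, Fin.le_def, Fits]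
    constructor
    · rintro ⟨x, hx, hxj, hjx⟩
      have := T.min'_le x hx
      have := T.le_max' x hx
      rw [Fin.le_def] at *
      omega
    · rintro ⟨hmj, hjM⟩
      by_cases hj : (j : ℕ) + k ≤ n + T.min' hT
      · exact ⟨_, T.min'_mem hT, hmj, hj⟩
      · exact ⟨_, T.max'_mem hT, by omega, by omega⟩
  rw [hcover, Fin.card_Icc]
  dsimp only
  omega

theorem card_add_le_card_filter_exists_fits {n k : ℕ} (hkn : k ≤ n) (hn : 2 * k ≤ n + 2)
    (T : Finset (Fin k)) (hT : T.Nonempty) :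
    #T + (n - k) ≤ #{j : Fin n | ∃ x ∈ T, Fits n k x j} ∧
      (#T + (n - k) = #{j : Fin n | ∃ x ∈ T, Fits n k x j} ↔ (T : Set (Fin k)).OrdConnected) := by
  have hle := Fin.card_le_max'_add_one_sub_min' T hT
  have hpos := card_pos.2 hT
  rw [card_filter_exists_fits hkn hn T hT,
    ← Fin.card_eq_max'_add_one_sub_min'_iff_ordConnected T hT]
  exact ⟨by omega, by omega⟩

def fittingRows (n k : ℕ) (i : Fin n) : Finset (Fin k) :=
  {y | Fits n k y i}

section Counting

variable {n k : ℕ}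

@[simp]
theorem mem_fittingRows {i : Fin n} {y : Fin k} : y ∈ fittingRows n k i ↔ Fits n k y i := by
  rw [fittingRows, mem_filter, and_iff_right (mem_univ y)]

theorem fittingRows_nonempty (hk : 1 ≤ k) (hkn : k ≤ n) (i : Fin n) :
    (fittingRows n k i).Nonempty :=
  ⟨⟨i + k - n, by omega⟩, by rw [mem_fittingRows, Fits]; dsimp only; omega⟩

theorem sum_card_fittingRows (hkn : k ≤ n) :
    ∑ i : Fin n, #(fittingRows n k i) = k * (n + 1 - k) := by
  have hcol : ∀ y : Fin k, #{i : Fin n | Fits n k y i} = n + 1 - k := fun y => by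
    have hy := y.isLt
    have : ({i : Fin n | Fits n k y i} : Finset (Fin n)) =
        Icc ⟨y, by omega⟩ ⟨y + n - k, by omega⟩ := by
      ext i
      simp only [mem_filter, mem_univ, true_and]
      simp only [Fits, mem_Icc, Fin.le_def]
      omega
    rw [this, Fin.card_Icc]
    dsimp only
    omega
  simp only [fittingRows, card_filter]
  rw [sum_comm]
  simp only [← card_filter, hcol, sum_const, card_univ, Fintype.card_fin, smul_eq_mul]

theorem card_fittingRows_add_le_card_row_forcedMatrix (hk : 1 ≤ k) (hn : 2 * k ≤ n)
    (σ : Equiv.Perm (Fin k)) (i : Fin n) :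
    #(fittingRows n k i) + (n - k) ≤ #{j | forcedMatrix n k σ i j = true} ∧
      (#(fittingRows n k i) + (n - k) = #{j | forcedMatrix n k σ i j = true} ↔
        (σ '' fittingRows n k i).OrdConnected) := by
  have hrow : #{j | forcedMatrix n k σ i j = true} =
      #{j : Fin n | ∃ x ∈ (fittingRows n k i).map σ.toEmbedding, Fits n k x j} := by
    simp [forcedMatrix, -mem_map_equiv]
  have := card_add_le_card_filter_exists_fits (n := n) (by omega) (by omega)
    ((fittingRows n k i).map σ.toEmbedding) ((fittingRows_nonempty hk (by omega) i).map)
  rwa [card_map, coe_map, Equiv.coe_toEmbedding, ← hrow] at this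

theorem onesCount_forcedMatrix (hk : 1 ≤ k) (hn : 2 * k ≤ n) (σ : Equiv.Perm (Fin k)) :
    n ^ 2 - k * (k - 1) ≤ onesCount (forcedMatrix n k σ) ∧
      (onesCount (forcedMatrix n k σ) = n ^ 2 - k * (k - 1) ↔
        ∀ i, (σ '' fittingRows n k i).OrdConnected) := by
  have hrow := card_fittingRows_add_le_card_row_forcedMatrix hk hn σ
  have htotal : ∑ i : Fin n, (#(fittingRows n k i) + (n - k)) = n ^ 2 - k * (k - 1) := by
    rw [sum_add_distrib, sum_card_fittingRows (by omega), sum_const, card_univ,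
      Fintype.card_fin, smul_eq_mul]
    obtain ⟨d, rfl⟩ := Nat.exists_eq_add_of_le (show k ≤ n by omega)
    obtain ⟨k, rfl⟩ := Nat.exists_eq_add_of_le hk
    rw [show 1 + k + d + 1 - (1 + k) = d + 1 by omega, show 1 + k + d - (1 + k) = d by omega,
      show 1 + k - 1 = k by omega]
    refine (Nat.sub_eq_of_eq_add ?_).symm
    ring
  rw [onesCount_eq_sum_card_row, ← htotal, eq_comm, sum_eq_sum_iff_of_le fun i _ => (hrow i).1]
  exact ⟨sum_le_sum fun i _ => (hrow i).1, by simp only [mem_univ, true_implies, (hrow _).2]⟩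

end Counting

theorem Set.OrdConnected.image_rev {k : ℕ} {s : Set (Fin k)} (hs : s.OrdConnected) :
    (Fin.rev '' s).OrdConnected := by
  refine ⟨?_⟩
  rintro _ ⟨a, ha, rfl⟩ _ ⟨b, hb, rfl⟩ z ⟨haz, hzb⟩
  exact ⟨z.rev, hs.out hb ha ⟨Fin.le_rev_iff.1 hzb, Fin.rev_le_iff.1 haz⟩, Fin.rev_rev z⟩

theorem ordConnected_fittingRows {n k : ℕ} (i : Fin n) :
    (fittingRows n k i : Set (Fin k)).OrdConnected := by
  refine ⟨fun a ha b hb z hz => ?_⟩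
  simp only [mem_coe, mem_fittingRows, Fits, Set.mem_Icc, Fin.le_def] at ha hb hz ⊢
  omega

theorem apply_zero_eq_zero_or_last {m : ℕ} (σ : Equiv.Perm (Fin (m + 1)))
    (h : (σ '' Set.Ioi 0).OrdConnected) : σ 0 = 0 ∨ σ 0 = Fin.last m := by
  by_contra! hne
  have hmem (x) (hx : x ≠ σ 0) : x ∈ σ '' Set.Ioi 0 :=
    ⟨σ.symm x, pos_iff_ne_zero.2 fun h0 => hx (by rw [← h0, σ.apply_symm_apply]),
      σ.apply_symm_apply x⟩
  obtain ⟨y, hy, hyσ⟩ :=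
    h.out (hmem 0 hne.1.symm) (hmem _ hne.2.symm) ⟨Fin.zero_le _, Fin.le_last _⟩
  exact hy.ne' (σ.injective hyσ)

theorem eq_one_of_ordConnected_image_Iic {m : ℕ} {σ : Equiv.Perm (Fin (m + 1))} (h0 : σ 0 = 0)
    (h : ∀ y, (σ '' Set.Iic y).OrdConnected) : σ = 1 := by
  refine Equiv.ext fun y => ?_
  induction y using WellFoundedLT.induction with
  | _ y ih =>
    have hge : y ≤ σ y := not_lt.1 fun hlt => hlt.ne (σ.injective (ih _ hlt))
    refine hge.antisymm' (not_lt.1 fun hlt => ?_)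
    -- `y` lies between `σ 0 = 0` and `σ y`, so it is the image of some `z ≤ y`
    obtain ⟨z, hz, hzy⟩ := (h y).out ⟨0, Fin.zero_le y, h0⟩ ⟨y, Set.mem_Iic.2 le_rfl, rfl⟩
      ⟨Fin.zero_le y, hlt.le⟩
    rcases (Set.mem_Iic.1 hz).lt_or_eq with hz | rfl
    · exact hz.ne ((ih z hz).symm.trans hzy)
    · exact hlt.ne' hzy

theorem forall_ordConnected_image_fittingRows_iff {n k : ℕ} (hk : 1 ≤ k) (hn : 2 * k ≤ n)
    (σ : Equiv.Perm (Fin k)) :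
    (∀ i : Fin n, (σ '' fittingRows n k i).OrdConnected) ↔ σ = 1 ∨ σ = Fin.revPerm := by
  constructor
  · intro h
    obtain ⟨m, rfl⟩ : ∃ m, k = m + 1 := ⟨k - 1, by omega⟩
    have hIic (y : Fin (m + 1)) : (σ '' Set.Iic y).OrdConnected := by
      have hrow : (fittingRows n (m + 1) ⟨y, by omega⟩ : Set (Fin (m + 1))) = Set.Iic y := by
        ext z
        simp only [mem_coe, mem_fittingRows, Fits, Set.mem_Iic, Fin.le_def]
        omega
      simpa [hrow] using h ⟨y, by omega⟩
    have hIoi : (σ '' Set.Ioi 0).OrdConnected := by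
      rcases m.eq_zero_or_pos with rfl | hm
      · simpa using Set.ordConnected_empty
      have hrow : (fittingRows n (m + 1) ⟨n - m, by omega⟩ : Set (Fin (m + 1))) = Set.Ioi 0 := by
        ext z
        simp only [mem_coe, mem_fittingRows, Fits, Set.mem_Ioi, Fin.lt_def, Fin.val_zero]
        omega
      simpa [hrow] using h ⟨n - m, by omega⟩
    rcases apply_zero_eq_zero_or_last σ hIoi with h0 | h0
    · exact .inl (eq_one_of_ordConnected_image_Iic h0 hIic)
    · have hrev : σ.trans Fin.revPerm = 1 := eq_one_of_ordConnected_image_Iic (by simp [h0])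
        fun y => by simpa [Set.image_comp] using (hIic y).image_rev
      exact .inr (by simpa using Equiv.trans_eq_refl_iff_eq_symm.1 hrev)
  · rintro (rfl | rfl) i
    · simpa using ordConnected_fittingRows i
    · simpa using (ordConnected_fittingRows i).image_rev

theorem stmt8 (k n : ℕ) (hk : 1 ≤ k) (hn : 2 * k ≤ n)
    (P : Fin k → Fin k → Bool) (hP : IsPermMatrix P) :
    n ^ 2 - k * (k - 1) ≤ mMin n n P ∧
    (mMin n n P = n ^ 2 - k * (k - 1) ↔
      (P = fun (i j : Fin k) => decide (i = j)) ∨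
      (P = fun (i j : Fin k) => decide ((i : ℕ) + (j : ℕ) = k - 1))) := by
  obtain ⟨σ, hσ⟩ := hP
  obtain rfl : P = permMatrix σ := funext₂ hσ
  obtain ⟨hle, heq⟩ := onesCount_forcedMatrix hk hn σ
  rw [mMin_permMatrix, heq, forall_ordConnected_image_fittingRows_iff hk hn, ← permMatrix_one,
    ← permMatrix_revPerm, permMatrix_injective.eq_iff, permMatrix_injective.eq_iff]
  exact ⟨hle, Iff.rfl⟩
end

section
/- If P is a k×k permutation matrix with k ≥ 3 different from I_k and H_k, then P contains a 0-entry (namely the center of a 3×3 'non-monotone' window of three consecutive rows and three consecutive columns) that lies in none of NW(P), NE(P), SW(P), SE(P); hence |NW(P)|+|NE(P)|+|SW(P)|+|SE(P)| < k(k−1). -/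
open Finset

/-!
If a permutation `σ` of `Fin k` goes up at every step or down at every step, it is the identity or
the reversal. Otherwise some three consecutive rows `b - 1, b, b + 1` carry a peak or a valley of
`σ`. At a peak, the zero `(b, max (σ (b - 1)) (σ (b + 1)))` has the 1-entries of rows `b - 1` and
`b + 1` weakly to its north-west and south-west, and the 1-entry of row `b` to its east, so it lies
in none of the four corners; a valley is handled dually with `min`. As every row and every column
of a permutation matrix holds a 1, the four corners are pairwise disjoint sets of zeros, and one of
the `k (k - 1)` zeros is missed.
-/

theorem Equiv.Perm.eq_one_of_strictMono {α : Type*} [LinearOrder α] [WellFoundedLT α]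
    {σ : Equiv.Perm α} (hσ : StrictMono σ) : σ = 1 :=
  Equiv.ext fun x => congrArg (· x)
    (Subsingleton.elim (hσ.orderIsoOfSurjective σ σ.surjective) (OrderIso.refl α))

theorem Equiv.Perm.eq_rev_of_strictAnti {n : ℕ} {σ : Equiv.Perm (Fin n)} (hσ : StrictAnti σ)
    (i : Fin n) : σ i = i.rev := by
  have h := Equiv.Perm.eq_one_of_strictMono (σ := σ.trans Fin.revPerm)
    (Fin.rev_strictAnti.comp hσ)
  simpa using congrArg (fun τ : Equiv.Perm (Fin n) => (τ i).rev) h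

theorem Fin.exists_peak_or_valley {α : Type*} [LinearOrder α] {n : ℕ} {f : Fin (n + 2) → α}
    (hf : Function.Injective f) (hmono : ¬StrictMono f) (hanti : ¬StrictAnti f) :
    ∃ i : Fin n,
      (f i.castSucc.castSucc < f i.succ.castSucc ∧ f i.succ.succ < f i.succ.castSucc) ∨
      (f i.succ.castSucc < f i.castSucc.castSucc ∧ f i.succ.castSucc < f i.succ.succ) := by
  by_contra! hno
  -- without a peak or a valley, every step goes in the direction of the first one
  have hstep : ∀ i : Fin (n + 1), f i.castSucc < f i.succ ↔ f 0 < f 1 := by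
    intro i
    induction i using Fin.induction with
    | zero => rfl
    | succ i ih =>
      rw [← ih, Fin.succ_castSucc]
      have hab := hf.ne (Fin.castSucc_lt_succ (i := i.castSucc)).ne
      rw [Fin.succ_castSucc] at hab
      have hbc := hf.ne (Fin.castSucc_lt_succ (i := i.succ)).ne
      grind
  rcases lt_or_gt_of_ne (hf.ne (show (0 : Fin (n + 2)) ≠ 1 from Fin.zero_ne_one)) with h01 | h10
  · exact hmono (Fin.strictMono_iff_lt_succ.2 fun i => (hstep i).2 h01)
  · refine hanti (Fin.strictAnti_iff_succ_lt.2 fun i => ?_)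
    exact (lt_or_gt_of_ne (hf.ne (Fin.castSucc_lt_succ (i := i)).ne)).resolve_left
      fun h => h10.not_gt ((hstep i).1 h)

section Corners

variable {m n : ℕ} {Q : Fin m → Fin n → Bool}

theorem notMem_cornerNW_of_le {i i' : Fin m} {j j' : Fin n} (h : Q i' j' = true)
    (hi : i' ≤ i) (hj : j' ≤ j) : (i, j) ∉ cornerNW Q :=
  fun hmem => by simpa [h] using (mem_filter.1 hmem).2 i' j' hi hj

theorem notMem_cornerNE_of_le {i i' : Fin m} {j j' : Fin n} (h : Q i' j' = true)
    (hi : i' ≤ i) (hj : j ≤ j') : (i, j) ∉ cornerNE Q :=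
  fun hmem => by simpa [h] using (mem_filter.1 hmem).2 i' j' hi hj

theorem notMem_cornerSW_of_le {i i' : Fin m} {j j' : Fin n} (h : Q i' j' = true)
    (hi : i ≤ i') (hj : j' ≤ j) : (i, j) ∉ cornerSW Q :=
  fun hmem => by simpa [h] using (mem_filter.1 hmem).2 i' j' hi hj

theorem notMem_cornerSE_of_le {i i' : Fin m} {j j' : Fin n} (h : Q i' j' = true)
    (hi : i ≤ i') (hj : j ≤ j') : (i, j) ∉ cornerSE Q :=
  fun hmem => by simpa [h] using (mem_filter.1 hmem).2 i' j' hi hj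

theorem notMem_corners_of_peak {a b c : Fin m} {ja jb jc : Fin n} (hab : a ≤ b) (hbc : b ≤ c)
    (ha : Q a ja = true) (hb : Q b jb = true) (hc : Q c jc = true)
    (hja : ja < jb) (hjc : jc < jb) :
    (b, max ja jc) ∉ cornerNW Q ∧ (b, max ja jc) ∉ cornerNE Q ∧
      (b, max ja jc) ∉ cornerSW Q ∧ (b, max ja jc) ∉ cornerSE Q :=
  ⟨notMem_cornerNW_of_le ha hab (le_max_left _ _),
    notMem_cornerNE_of_le hb le_rfl (max_le hja.le hjc.le),
    notMem_cornerSW_of_le hc hbc (le_max_right _ _),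
    notMem_cornerSE_of_le hb le_rfl (max_le hja.le hjc.le)⟩

theorem notMem_corners_of_valley {a b c : Fin m} {ja jb jc : Fin n} (hab : a ≤ b) (hbc : b ≤ c)
    (ha : Q a ja = true) (hb : Q b jb = true) (hc : Q c jc = true)
    (hja : jb < ja) (hjc : jb < jc) :
    (b, min ja jc) ∉ cornerNW Q ∧ (b, min ja jc) ∉ cornerNE Q ∧
      (b, min ja jc) ∉ cornerSW Q ∧ (b, min ja jc) ∉ cornerSE Q :=
  ⟨notMem_cornerNW_of_le hb le_rfl (le_min hja.le hjc.le),
    notMem_cornerNE_of_le ha hab (min_le_left _ _),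
    notMem_cornerSW_of_le hb le_rfl (le_min hja.le hjc.le),
    notMem_cornerSE_of_le hc hbc (min_le_right _ _)⟩

theorem corners_subset_zeros :
    cornerNW Q ∪ cornerNE Q ∪ cornerSW Q ∪ cornerSE Q ⊆ univ.filter fun p => Q p.1 p.2 = false := by
  intro p hp
  simp only [cornerNW, cornerNE, cornerSW, cornerSE, mem_union, mem_filter, mem_univ,
    true_and] at hp ⊢
  rcases hp with ((h | h) | h) | h <;> exact h _ _ le_rfl le_rfl

theorem disjoint_of_forall_row_has_one (hrow : ∀ i, ∃ j, Q i j = true)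
    {s t : Finset (Fin m × Fin n)} (hs : ∀ p ∈ s, ∀ j ≤ p.2, Q p.1 j = false)
    (ht : ∀ p ∈ t, ∀ j, p.2 ≤ j → Q p.1 j = false) : Disjoint s t := by
  refine disjoint_left.2 fun p hps hpt => ?_
  obtain ⟨j, hj⟩ := hrow p.1
  rcases le_total j p.2 with h | h
  · simp [hs p hps j h] at hj
  · simp [ht p hpt j h] at hj

theorem disjoint_of_forall_col_has_one (hcol : ∀ j, ∃ i, Q i j = true)
    {s t : Finset (Fin m × Fin n)} (hs : ∀ p ∈ s, ∀ i ≤ p.1, Q i p.2 = false)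
    (ht : ∀ p ∈ t, ∀ i, p.1 ≤ i → Q i p.2 = false) : Disjoint s t := by
  refine disjoint_left.2 fun p hps hpt => ?_
  obtain ⟨i, hi⟩ := hcol p.2
  rcases le_total i p.1 with h | h
  · simp [hs p hps i h] at hi
  · simp [ht p hpt i h] at hi

theorem card_corners_eq_card_union (hrow : ∀ i, ∃ j, Q i j = true)
    (hcol : ∀ j, ∃ i, Q i j = true) :
    #(cornerNW Q) + #(cornerNE Q) + #(cornerSW Q) + #(cornerSE Q) =
      #(cornerNW Q ∪ cornerNE Q ∪ cornerSW Q ∪ cornerSE Q) := by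
  have NW_left : ∀ p ∈ cornerNW Q, ∀ j ≤ p.2, Q p.1 j = false :=
    fun p hp j hj => (mem_filter.1 hp).2 _ _ le_rfl hj
  have SW_left : ∀ p ∈ cornerSW Q, ∀ j ≤ p.2, Q p.1 j = false :=
    fun p hp j hj => (mem_filter.1 hp).2 _ _ le_rfl hj
  have NE_right : ∀ p ∈ cornerNE Q, ∀ j, p.2 ≤ j → Q p.1 j = false :=
    fun p hp j hj => (mem_filter.1 hp).2 _ _ le_rfl hj
  have SE_right : ∀ p ∈ cornerSE Q, ∀ j, p.2 ≤ j → Q p.1 j = false :=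
    fun p hp j hj => (mem_filter.1 hp).2 _ _ le_rfl hj
  have NW_up : ∀ p ∈ cornerNW Q, ∀ i ≤ p.1, Q i p.2 = false :=
    fun p hp i hi => (mem_filter.1 hp).2 _ _ hi le_rfl
  have NE_up : ∀ p ∈ cornerNE Q, ∀ i ≤ p.1, Q i p.2 = false :=
    fun p hp i hi => (mem_filter.1 hp).2 _ _ hi le_rfl
  have SW_down : ∀ p ∈ cornerSW Q, ∀ i, p.1 ≤ i → Q i p.2 = false :=
    fun p hp i hi => (mem_filter.1 hp).2 _ _ hi le_rfl
  have SE_down : ∀ p ∈ cornerSE Q, ∀ i, p.1 ≤ i → Q i p.2 = false :=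
    fun p hp i hi => (mem_filter.1 hp).2 _ _ hi le_rfl
  rw [card_union_of_disjoint (disjoint_union_left.2
      ⟨disjoint_union_left.2 ⟨disjoint_of_forall_row_has_one hrow NW_left SE_right,
        disjoint_of_forall_col_has_one hcol NE_up SE_down⟩,
        disjoint_of_forall_row_has_one hrow SW_left SE_right⟩),
    card_union_of_disjoint (disjoint_union_left.2
      ⟨disjoint_of_forall_col_has_one hcol NW_up SW_down,
        (disjoint_of_forall_row_has_one hrow SW_left NE_right).symm⟩),
    card_union_of_disjoint (disjoint_of_forall_row_has_one hrow NW_left NE_right)]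

theorem card_corners_lt_zerosCount (hrow : ∀ i, ∃ j, Q i j = true)
    (hcol : ∀ j, ∃ i, Q i j = true) {i : Fin m} {j : Fin n} (hij : Q i j = false)
    (hNW : (i, j) ∉ cornerNW Q) (hNE : (i, j) ∉ cornerNE Q) (hSW : (i, j) ∉ cornerSW Q)
    (hSE : (i, j) ∉ cornerSE Q) :
    #(cornerNW Q) + #(cornerNE Q) + #(cornerSW Q) + #(cornerSE Q) < zerosCount Q := by
  rw [card_corners_eq_card_union hrow hcol, zerosCount]
  refine card_lt_card ((ssubset_iff_of_subset corners_subset_zeros).2 ⟨(i, j), ?_, ?_⟩)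
  · simpa using hij
  · simp only [mem_union, not_or]
    exact ⟨⟨⟨hNW, hNE⟩, hSW⟩, hSE⟩

end Corners

theorem IsPermMatrix.zerosCount_eq {k : ℕ} {P : Fin k → Fin k → Bool} (hP : IsPermMatrix P) :
    zerosCount P = k * (k - 1) := by
  obtain ⟨σ, hσ⟩ := hP
  have hrow (i : Fin k) : #{j | σ i ≠ j} = k - 1 := by
    rw [filter_ne, card_erase_of_mem (mem_univ _), card_univ, Fintype.card_fin]
  simp only [zerosCount, hσ, decide_eq_false_iff_not]
  rw [card_filter, Fintype.sum_prod_type]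
  simp only [← card_filter, hrow, sum_const, card_univ, Fintype.card_fin, smul_eq_mul]

theorem exists_zero_notMem_corners_of_perm {n : ℕ} {P : Fin (n + 2) → Fin (n + 2) → Bool}
    {σ : Equiv.Perm (Fin (n + 2))} (hσ : ∀ i j, P i j = decide (σ i = j))
    (hmono : ¬StrictMono σ) (hanti : ¬StrictAnti σ) :
    ∃ i j, P i j = false ∧ (i, j) ∉ cornerNW P ∧ (i, j) ∉ cornerNE P ∧
      (i, j) ∉ cornerSW P ∧ (i, j) ∉ cornerSE P := by
  have hone (i : Fin (n + 2)) : P i (σ i) = true := by simp [hσ]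
  have hab (i : Fin n) : i.castSucc.castSucc ≤ i.succ.castSucc := by simp [Fin.le_def]
  have hbc (i : Fin n) : i.succ.castSucc ≤ i.succ.succ := Fin.castSucc_le_succ _
  obtain ⟨i, ⟨h₁, h₂⟩ | ⟨h₁, h₂⟩⟩ := Fin.exists_peak_or_valley σ.injective hmono hanti
  · exact ⟨_, _, by rw [hσ]; exact decide_eq_false (max_lt h₁ h₂).ne',
      notMem_corners_of_peak (hab i) (hbc i) (hone _) (hone _) (hone _) h₁ h₂⟩
  · exact ⟨_, _, by rw [hσ]; exact decide_eq_false (lt_min h₁ h₂).ne,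
      notMem_corners_of_valley (hab i) (hbc i) (hone _) (hone _) (hone _) h₁ h₂⟩

theorem stmt9 (k : ℕ) (hk : 3 ≤ k) (P : Fin k → Fin k → Bool) (hP : IsPermMatrix P)
    (hI : P ≠ fun i j => decide (i = j))
    (hH : P ≠ fun (i j : Fin k) => decide ((i : ℕ) + (j : ℕ) = k - 1)) :
    (∃ (i j : Fin k), P i j = false ∧ (i, j) ∉ cornerNW P ∧ (i, j) ∉ cornerNE P ∧
      (i, j) ∉ cornerSW P ∧ (i, j) ∉ cornerSE P) ∧
    (cornerNW P).card + (cornerNE P).card + (cornerSW P).card + (cornerSE P).card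
      < k * (k - 1) := by
  obtain ⟨n, rfl⟩ : ∃ n, k = n + 2 := ⟨k - 2, by omega⟩
  obtain ⟨σ, hσ⟩ := id hP
  have hmono : ¬StrictMono σ := fun h => hI <| by
    funext i j
    simp [hσ, Equiv.Perm.eq_one_of_strictMono h]
  have hanti : ¬StrictAnti σ := fun h => hH <| by
    funext i j
    simp only [hσ, Equiv.Perm.eq_rev_of_strictAnti h, Fin.ext_iff, Fin.val_rev]
    exact decide_eq_decide.2 (by omega)
  obtain ⟨i, j, hij, hNW, hNE, hSW, hSE⟩ := exists_zero_notMem_corners_of_perm hσ hmono hanti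
  refine ⟨⟨i, j, hij, hNW, hNE, hSW, hSE⟩, hP.zerosCount_eq ▸ ?_⟩
  exact card_corners_lt_zerosCount (fun i => ⟨σ i, by simp [hσ]⟩)
    (fun j => ⟨σ.symm j, by simp [hσ]⟩) hij hNW hNE hSW hSE
end

section
/- For every s×t (0,1)-matrix Q with at least one 1-entry, the number of 0-entries of an extremal strongly Q-forcing m×n matrix is O(m+n); concretely, for m ≥ s and n ≥ t there exists an m×n strongly Q-forcing matrix with at most st·(m + n) 0-entries, so mn − M(m,n,Q) ≤ st(m+n). -/
open Finset

/-- Block map for the blow-up construction: singleton blocks everywhere except a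
big block of size `d + 1` at value `y0`. -/
def bmap (y0 d v : ℕ) : ℕ := max (min v y0) (v - d)

/-- A strictly monotone section of `bmap y0 d` whose value at `y0` is `mid`. -/
def bsec (y0 d mid y : ℕ) : ℕ := if y < y0 then y else if y = y0 then mid else y + d

theorem stmt11 (m n s t : ℕ) (hm : s ≤ m) (hn : t ≤ n) (Q : Fin s → Fin t → Bool)
    (hQ : ∃ y x, Q y x = true) :
    (∃ A : Fin m → Fin n → Bool, IsStronglyForcing A Q ∧ zerosCount A ≤ s * t * (m + n)) ∧
    m * n - MMax m n Q ≤ s * t * (m + n) := by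
  obtain ⟨y0, x0, hQyx⟩ := hQ
  have hs : 0 < s := y0.pos
  have ht : 0 < t := x0.pos
  -- the blow-up maps
  have hφlt : ∀ i : Fin m, bmap y0.1 (m - s) i.1 < s := by
    intro i; have := i.isLt; have := y0.isLt; unfold bmap; omega
  have hψlt : ∀ j : Fin n, bmap x0.1 (n - t) j.1 < t := by
    intro j; have := j.isLt; have := x0.isLt; unfold bmap; omega
  set φ : Fin m → Fin s := fun i => ⟨bmap y0.1 (m - s) i.1, hφlt i⟩ with hφ
  set ψ : Fin n → Fin t := fun j => ⟨bmap x0.1 (n - t) j.1, hψlt j⟩ with hψ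
  set A : Fin m → Fin n → Bool := fun i j => Q (φ i) (ψ j) with hA
  -- A is strongly forcing
  have hforce : IsStronglyForcing A Q := by
    intro i j _
    set midr : ℕ := if bmap y0.1 (m - s) i.1 = y0.1 then i.1 else y0.1 with hmidr
    set midc : ℕ := if bmap x0.1 (n - t) j.1 = x0.1 then j.1 else x0.1 with hmidc
    have hmr : y0.1 ≤ midr ∧ midr ≤ y0.1 + (m - s) := by
      rw [hmidr]; have := i.isLt; unfold bmap; split_ifs <;> omega
    have hmc : x0.1 ≤ midc ∧ midc ≤ x0.1 + (n - t) := by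
      rw [hmidc]; have := j.isLt; unfold bmap; split_ifs <;> omega
    have hrlt : ∀ y : Fin s, bsec y0.1 (m - s) midr y.1 < m := by
      intro y; have := y.isLt; have := y0.isLt; unfold bsec; split_ifs <;> omega
    have hclt : ∀ x : Fin t, bsec x0.1 (n - t) midc x.1 < n := by
      intro x; have := x.isLt; have := x0.isLt; unfold bsec; split_ifs <;> omega
    refine ⟨fun y => ⟨bsec y0.1 (m - s) midr y.1, hrlt y⟩,
            fun x => ⟨bsec x0.1 (n - t) midc x.1, hclt x⟩, ?_, ?_, ?_, ?_⟩
    · intro y y' hyy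
      have : bsec y0.1 (m - s) midr y.1 < bsec y0.1 (m - s) midr y'.1 := by
        have h1 := hmr.1; have h2 := hmr.2
        have : y.1 < y'.1 := hyy
        unfold bsec; split_ifs <;> omega
      exact this
    · intro x x' hxx
      have : bsec x0.1 (n - t) midc x.1 < bsec x0.1 (n - t) midc x'.1 := by
        have h1 := hmc.1; have h2 := hmc.2
        have : x.1 < x'.1 := hxx
        unfold bsec; split_ifs <;> omega
      exact this
    · intro y x
      have hry : bmap y0.1 (m - s) (bsec y0.1 (m - s) midr y.1) = y.1 := by
        have h1 := hmr.1; have h2 := hmr.2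
        unfold bmap bsec; split_ifs <;> omega
      have hcx : bmap x0.1 (n - t) (bsec x0.1 (n - t) midc x.1) = x.1 := by
        have h1 := hmc.1; have h2 := hmc.2
        unfold bmap bsec; split_ifs <;> omega
      simp only [hA, hφ, hψ]
      congr 1 <;> exact Fin.ext (by simpa)
    · refine ⟨φ i, ψ j, ?_, ?_⟩
      · apply Fin.ext
        show bsec y0.1 (m - s) midr (bmap y0.1 (m - s) i.1) = i.1
        rw [hmidr]; unfold bmap bsec; split_ifs <;> omega
      · apply Fin.ext
        show bsec x0.1 (n - t) midc (bmap x0.1 (n - t) j.1) = j.1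
        rw [hmidc]; unfold bmap bsec; split_ifs <;> omega
  -- zero count bound
  have hz : zerosCount A ≤ s * t * (m + n) := by
    have hsub : (univ.filter fun p : Fin m × Fin n => A p.1 p.2 = false) ⊆
        ((univ.filter fun i : Fin m => φ i ≠ y0) ×ˢ univ) ∪
        (univ ×ˢ (univ.filter fun j : Fin n => ψ j ≠ x0)) := by
      intro p hp
      simp only [mem_filter, mem_union, mem_product, mem_univ, true_and, and_true] at hp ⊢
      by_contra h
      push_neg at h
      have hp' : Q (φ p.1) (ψ p.2) = false := hp
      rw [h.1, h.2, hQyx] at hp'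
      simp at hp'
    have c1 : (univ.filter fun i : Fin m => φ i ≠ y0).card ≤ s := by
      have : (univ.filter fun i : Fin m => φ i ≠ y0).card ≤ (univ : Finset (Fin s)).card := by
        apply Finset.card_le_card_of_injOn φ (fun _ _ => mem_univ _)
        intro a ha b hb hab
        simp only [mem_coe, mem_filter] at ha hb
        have hv : bmap y0.1 (m - s) a.1 = bmap y0.1 (m - s) b.1 := congrArg Fin.val hab
        have hne : bmap y0.1 (m - s) a.1 ≠ y0.1 := fun hh => ha.2 (Fin.ext hh)
        apply Fin.ext
        unfold bmap at hv hne; omega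
      simpa using this
    have c2 : (univ.filter fun j : Fin n => ψ j ≠ x0).card ≤ t := by
      have : (univ.filter fun j : Fin n => ψ j ≠ x0).card ≤ (univ : Finset (Fin t)).card := by
        apply Finset.card_le_card_of_injOn ψ (fun _ _ => mem_univ _)
        intro a ha b hb hab
        simp only [mem_coe, mem_filter] at ha hb
        have hv : bmap x0.1 (n - t) a.1 = bmap x0.1 (n - t) b.1 := congrArg Fin.val hab
        have hne : bmap x0.1 (n - t) a.1 ≠ x0.1 := fun hh => ha.2 (Fin.ext hh)
        apply Fin.ext
        unfold bmap at hv hne; omega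
      simpa using this
    calc zerosCount A ≤ (((univ.filter fun i : Fin m => φ i ≠ y0) ×ˢ univ) ∪
        (univ ×ˢ (univ.filter fun j : Fin n => ψ j ≠ x0))).card :=
          Finset.card_le_card hsub
      _ ≤ ((univ.filter fun i : Fin m => φ i ≠ y0) ×ˢ (univ : Finset (Fin n))).card +
          ((univ : Finset (Fin m)) ×ˢ (univ.filter fun j : Fin n => ψ j ≠ x0)).card :=
          Finset.card_union_le _ _
      _ = (univ.filter fun i : Fin m => φ i ≠ y0).card * n +
          m * (univ.filter fun j : Fin n => ψ j ≠ x0).card := by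
          simp [Finset.card_product]
      _ ≤ s * n + m * t := by
          have := Nat.mul_le_mul_right n c1
          have := Nat.mul_le_mul_left m c2
          omega
      _ ≤ s * t * (m + n) := by
          have h1 : s * n ≤ s * t * n := Nat.mul_le_mul_right n (Nat.le_mul_of_pos_right s ht)
          have h2 : m * t ≤ s * t * m := by
            calc m * t = t * m := Nat.mul_comm m t
              _ ≤ s * t * m := Nat.mul_le_mul_right m (Nat.le_mul_of_pos_left t hs)
          rw [Nat.mul_add]
          linarith
  -- ones + zeros = m*n
  have hsum : onesCount A + zerosCount A = m * n := by
    have h1 : (univ.filter fun p : Fin m × Fin n => A p.1 p.2 = false)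
        = univ.filter fun p : Fin m × Fin n => ¬ (A p.1 p.2 = true) := by
      simp [Bool.not_eq_true]
    unfold onesCount zerosCount
    rw [h1, Finset.card_filter_add_card_filter_not]
    simp
  -- MMax bound
  have hmem : onesCount A ∈ {v | ∃ B : Fin m → Fin n → Bool, IsStronglyForcing B Q ∧ onesCount B = v} :=
    ⟨A, hforce, rfl⟩
  have hbdd : BddAbove {v | ∃ B : Fin m → Fin n → Bool, IsStronglyForcing B Q ∧ onesCount B = v} := by
    refine ⟨m * n, ?_⟩
    rintro v ⟨B, -, rfl⟩
    calc onesCount B ≤ (univ : Finset (Fin m × Fin n)).card := Finset.card_le_card (filter_subset _ _)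
      _ = m * n := by simp
  have hle : onesCount A ≤ MMax m n Q := le_csSup hbdd hmem
  refine ⟨⟨A, hforce, hz⟩, ?_⟩
  unfold MMax at hle ⊢
  omega
end

section
/- For n ≥ 2, the matrix J_n − H_n (all-one matrix minus the anti-diagonal identity) is strongly I_2-forcing, where I_2 is the 2×2 identity matrix; hence M(n, I_2) ≥ n² − n. -/
open Finset

theorem stmt12 (n : ℕ) (hn : 2 ≤ n) :
    IsStronglyForcing (fun (i j : Fin n) => decide ((i : ℕ) + (j : ℕ) ≠ n - 1))
      (fun (i j : Fin 2) => decide (i = j)) ∧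
    n ^ 2 - n ≤ MMax n n (fun (i j : Fin 2) => decide (i = j)) := by
  set A : Fin n → Fin n → Bool := fun i j => decide ((i : ℕ) + (j : ℕ) ≠ n - 1) with hAdef
  have hSF : IsStronglyForcing A (fun (i j : Fin 2) => decide (i = j)) := by
    intro i j hij
    have hi := i.isLt; have hj := j.isLt
    simp only [hAdef, decide_eq_true_eq] at hij
    rcases lt_or_gt_of_ne hij with h | h
    · refine ⟨![i, ⟨n-1-(j:ℕ), by omega⟩], ![j, ⟨n-1-(i:ℕ), by omega⟩], ?_, ?_, ?_,
        0, 0, rfl, rfl⟩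
      · intro a b hab
        fin_cases a <;> fin_cases b <;> simp_all [Fin.lt_def] <;> omega
      · intro a b hab
        fin_cases a <;> fin_cases b <;> simp_all [Fin.lt_def] <;> omega
      · intro y x
        fin_cases y <;> fin_cases x <;> simp_all [hAdef, decide_eq_decide] <;> omega
    · refine ⟨![⟨n-1-(j:ℕ), by omega⟩, i], ![⟨n-1-(i:ℕ), by omega⟩, j], ?_, ?_, ?_,
        1, 1, rfl, rfl⟩
      · intro a b hab
        fin_cases a <;> fin_cases b <;> simp_all [Fin.lt_def] <;> omega
      · intro a b hab
        fin_cases a <;> fin_cases b <;> simp_all [Fin.lt_def] <;> omega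
      · intro y x
        fin_cases y <;> fin_cases x <;> simp_all [hAdef, decide_eq_decide] <;> omega
  refine ⟨hSF, ?_⟩
  have hcount : onesCount A = n ^ 2 - n := by
    have key : (Finset.univ.filter (fun p : Fin n × Fin n => (p.1:ℕ) + (p.2:ℕ) = n - 1))
        = Finset.univ.image (fun i : Fin n =>
            ((i, ⟨n-1-(i:ℕ), by have := i.isLt; omega⟩) : Fin n × Fin n)) := by
      ext p
      simp only [Finset.mem_filter, Finset.mem_univ, true_and, Finset.mem_image]
      constructor
      · intro hp
        refine ⟨p.1, ?_⟩
        have h1 := p.1.isLt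
        have h2 := p.2.isLt
        refine Prod.ext rfl (Fin.ext ?_)
        simp only
        omega
      · rintro ⟨a, rfl⟩
        have := a.isLt
        simp only
        omega
    have hkeycard :
        (Finset.univ.filter (fun p : Fin n × Fin n => (p.1:ℕ) + (p.2:ℕ) = n - 1)).card = n := by
      rw [key, Finset.card_image_of_injective _
        (fun a b hab => by simpa using congrArg Prod.fst hab)]
      simp
    have hsplit := Finset.card_filter_add_card_filter_not
      (s := (Finset.univ : Finset (Fin n × Fin n)))
      (p := fun p : Fin n × Fin n => (p.1:ℕ) + (p.2:ℕ) = n - 1)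
    have huniv : (Finset.univ : Finset (Fin n × Fin n)).card = n ^ 2 := by
      simp [sq]
    have hones : onesCount A
        = (Finset.univ.filter
            (fun p : Fin n × Fin n => ¬ ((p.1:ℕ) + (p.2:ℕ) = n - 1))).card := by
      unfold onesCount
      congr 1
      ext p
      simp [hAdef]
    rw [hones]
    omega
  have hbdd : BddAbove {v | ∃ B : Fin n → Fin n → Bool,
      IsStronglyForcing B (fun (i j : Fin 2) => decide (i = j)) ∧ onesCount B = v} := by
    refine ⟨n ^ 2, ?_⟩
    rintro v ⟨B, _, rfl⟩
    calc onesCount B ≤ (Finset.univ : Finset (Fin n × Fin n)).card :=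
          Finset.card_filter_le _ _
      _ = n ^ 2 := by simp [sq]
  have hmem : n ^ 2 - n ∈ {v | ∃ B : Fin n → Fin n → Bool,
      IsStronglyForcing B (fun (i j : Fin 2) => decide (i = j)) ∧ onesCount B = v} :=
    ⟨A, hSF, hcount⟩
  exact le_csSup hbdd hmem
end

section
/- If n ≥ 2 and A is an n×n strongly I_2-forcing matrix, then every row and every column of A contains at least one 0-entry; hence A has at most n² − n 1-entries. -/
open Finset

theorem stmt14 (n : ℕ) (hn : 2 ≤ n) (A : Fin n → Fin n → Bool)
    (hA : IsStronglyForcing A (fun (i j : Fin 2) => decide (i = j))) :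
    (∀ i, ∃ j, A i j = false) ∧ (∀ j, ∃ i, A i j = false) ∧
    onesCount A ≤ n ^ 2 - n := by
  classical
  have hn0 : 0 < n := by omega
  -- every row has a zero
  have hrow : ∀ i, ∃ j, A i j = false := by
    intro i
    by_cases hex : ∃ j, A i j = true
    · obtain ⟨j, hj⟩ := hex
      obtain ⟨r, c, hr, hc, hQ, y, x, hy, hx⟩ := hA i j hj
      have hQyx : decide (y = x) = true := by
        have := hQ y x; rw [hy, hx, hj] at this; exact this.symm
      have hyx : y = x := of_decide_eq_true hQyx
      subst hyx
      have hycase : y = 0 ∨ y = 1 := by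
        have := y.isLt; rcases y with ⟨v, hv⟩
        interval_cases v
        · exact Or.inl rfl
        · exact Or.inr rfl
      rcases hycase with h0 | h1
      · subst h0
        exact ⟨c 1, by have := hQ 0 1; rw [hy] at this; simpa using this⟩
      · subst h1
        exact ⟨c 0, by have := hQ 1 0; rw [hy] at this; simpa using this⟩
    · push_neg at hex
      exact ⟨⟨0, hn0⟩, by simpa using hex ⟨0, hn0⟩⟩
  have hcol : ∀ j, ∃ i, A i j = false := by
    intro j
    by_cases hex : ∃ i, A i j = true
    · obtain ⟨i, hi⟩ := hex
      obtain ⟨r, c, hr, hc, hQ, y, x, hy, hx⟩ := hA i j hi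
      have hQyx : decide (y = x) = true := by
        have := hQ y x; rw [hy, hx, hi] at this; exact this.symm
      have hyx : y = x := of_decide_eq_true hQyx
      subst hyx
      have hycase : y = 0 ∨ y = 1 := by
        have := y.isLt; rcases y with ⟨v, hv⟩
        interval_cases v
        · exact Or.inl rfl
        · exact Or.inr rfl
      rcases hycase with h0 | h1
      · subst h0
        exact ⟨r 1, by have := hQ 1 0; rw [hx] at this; simpa using this⟩
      · subst h1
        exact ⟨r 0, by have := hQ 0 1; rw [hx] at this; simpa using this⟩
    · push_neg at hex
      exact ⟨⟨0, hn0⟩, by simpa using hex ⟨0, hn0⟩⟩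
  refine ⟨hrow, hcol, ?_⟩
  have hsum : onesCount A + zerosCount A = n ^ 2 := by
    unfold onesCount zerosCount
    have : (Finset.univ.filter (fun p : Fin n × Fin n => A p.1 p.2 = false))
        = Finset.univ.filter (fun p : Fin n × Fin n => ¬ A p.1 p.2 = true) := by
      apply Finset.filter_congr; intro p _; simp
    rw [this, Finset.card_filter_add_card_filter_not]
    simp [sq]
  have hz : n ≤ zerosCount A := by
    unfold zerosCount
    have := Finset.card_le_card_of_injOn
      (f := fun i : Fin n => (i, (hrow i).choose))
      (s := Finset.univ)
      (t := Finset.univ.filter (fun p : Fin n × Fin n => A p.1 p.2 = false))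
      (by intro i _; simp [(hrow i).choose_spec])
      (by intro a _ b _ h; exact (Prod.mk.injEq _ _ _ _).mp h |>.1)
    simpa using this
  omega
end

section
/- For n ≥ k ≥ 2, the n×n matrix S_{n,k} = I_{k−2} ⊕ (J_{n−k+2} − H_{n−k+2}) is strongly I_k-forcing and has exactly n² − (2k−3)n − (2k − k²) ones; consequently M(n, I_k) ≥ n² − (2k−3)n + k² − 2k. -/
open Finset

def myEmb (n k a b : ℕ) (hkn : k ≤ n) (han : a < n) (hb : b < n) : Fin k → Fin n :=
  fun y => if (y : ℕ) < k - 2 then ⟨y, lt_of_lt_of_le y.isLt hkn⟩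
    else if (y : ℕ) = k - 2 then ⟨a, han⟩ else ⟨b, hb⟩

lemma myEmb_val (n k a b : ℕ) (hkn : k ≤ n) (han : a < n) (hb : b < n) (y : Fin k) :
    (myEmb n k a b hkn han hb y : ℕ) =
      if (y : ℕ) < k - 2 then (y : ℕ) else if (y : ℕ) = k - 2 then a else b := by
  unfold myEmb; split_ifs <;> rfl

lemma myEmb_mono (n k a b : ℕ) (hkn : k ≤ n) (han : a < n) (hb : b < n)
    (ha : k - 2 ≤ a) (hab : a < b) : StrictMono (myEmb n k a b hkn han hb) := by
  intro y1 y2 h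
  have h1 := y1.isLt; have h2 := y2.isLt
  have hy : (y1 : ℕ) < (y2 : ℕ) := h
  simp only [Fin.lt_iff_val_lt_val, myEmb_val]
  split_ifs <;> omega

lemma myKeySub (n k : ℕ) (hk : 2 ≤ k) (hn : k ≤ n) (a b c d : ℕ)
    (ha : k - 2 ≤ a) (hc : k - 2 ≤ c) (hab : a < b) (hcd : c < d)
    (hb : b < n) (hd : d < n)
    (had : a + d = n + k - 3) (hbc : b + c = n + k - 3) :
    ∃ r cc : Fin k → Fin n, StrictMono r ∧ StrictMono cc ∧
      (∀ y x : Fin k,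
        decide (((r y : ℕ) < k - 2 ∧ (r y : ℕ) = (cc x : ℕ)) ∨
          (k - 2 ≤ (r y : ℕ) ∧ k - 2 ≤ (cc x : ℕ) ∧ (r y : ℕ) + (cc x : ℕ) ≠ n + k - 3))
          = decide (y = x)) ∧
      (∀ y : Fin k, (y : ℕ) < k - 2 → (r y : ℕ) = (y : ℕ) ∧ (cc y : ℕ) = (y : ℕ)) ∧
      (∀ y : Fin k, (y : ℕ) = k - 2 → (r y : ℕ) = a ∧ (cc y : ℕ) = c) ∧
      (∀ y : Fin k, (y : ℕ) = k - 1 → (r y : ℕ) = b ∧ (cc y : ℕ) = d) := by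
  have han : a < n := lt_trans hab hb
  have hcn : c < n := lt_trans hcd hd
  refine ⟨myEmb n k a b hn han hb, myEmb n k c d hn hcn hd,
    myEmb_mono n k a b hn han hb ha hab, myEmb_mono n k c d hn hcn hd hc hcd, ?_, ?_, ?_, ?_⟩
  · intro y x
    have h1 := y.isLt; have h2 := x.isLt
    rw [decide_eq_decide, Fin.ext_iff, myEmb_val, myEmb_val]
    split_ifs <;> omega
  · intro y hy; rw [myEmb_val, myEmb_val]; have := y.isLt; split_ifs <;> omega
  · intro y hy; rw [myEmb_val, myEmb_val]; have := y.isLt; split_ifs <;> omega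
  · intro y hy; rw [myEmb_val, myEmb_val]; have := y.isLt; split_ifs <;> omega

lemma myCardProd (n : ℕ) (p : ℕ → ℕ → Prop) [∀ i j, Decidable (p i j)] :
    ((univ : Finset (Fin n × Fin n)).filter (fun q => p ↑q.1 ↑q.2)).card
      = ∑ i ∈ range n, ((range n).filter (p i)).card := by
  rw [Finset.card_filter, Fintype.sum_prod_type]
  calc ∑ i : Fin n, ∑ j : Fin n, (if p ↑i ↑j then 1 else 0)
      = ∑ i : Fin n, ((range n).filter (p ↑i)).card := by
        refine Finset.sum_congr rfl fun i _ => ?_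
        rw [Finset.card_filter]
        exact Fin.sum_univ_eq_sum_range (fun j => if p ↑i j then 1 else 0) n
    _ = ∑ i ∈ range n, ((range n).filter (p i)).card :=
        Fin.sum_univ_eq_sum_range (fun i => ((range n).filter (p i)).card) n

lemma myForcing (n k : ℕ) (hk : 2 ≤ k) (hn : k ≤ n) :
    IsStronglyForcing
      (fun (i j : Fin n) =>
        decide (((i : ℕ) < k - 2 ∧ (i : ℕ) = (j : ℕ)) ∨
          (k - 2 ≤ (i : ℕ) ∧ k - 2 ≤ (j : ℕ) ∧ (i : ℕ) + (j : ℕ) ≠ n + k - 3)))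
      (fun (i j : Fin k) => decide (i = j)) := by
  intro i j hij
  rw [decide_eq_true_eq] at hij
  have hi' := i.isLt; have hj' := j.isLt
  rcases hij with ⟨hi, hij⟩ | ⟨hi, hj, hijN⟩
  · obtain ⟨r, cc, hr, hc, hent, hlow, hmid, hhigh⟩ :=
      myKeySub n k hk hn (k - 2) (n - 1) (k - 2) (n - 1) le_rfl le_rfl (by omega) (by omega)
        (by omega) (by omega) (by omega) (by omega)
    exact ⟨r, cc, hr, hc, fun y x => hent y x,
      ⟨(i : ℕ), by omega⟩, ⟨(j : ℕ), by omega⟩,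
      Fin.ext ((hlow ⟨(i : ℕ), by omega⟩ hi).1),
      Fin.ext ((hlow ⟨(j : ℕ), by omega⟩ (show (j : ℕ) < k - 2 by omega)).2)⟩
  · rcases Nat.lt_or_gt_of_ne hijN with h | h
    · obtain ⟨r, cc, hr, hc, hent, hlow, hmid, hhigh⟩ :=
        myKeySub n k hk hn (i : ℕ) (n + k - 3 - (j : ℕ)) (j : ℕ) (n + k - 3 - (i : ℕ))
          hi hj (by omega) (by omega) (by omega) (by omega) (by omega) (by omega)
      exact ⟨r, cc, hr, hc, fun y x => hent y x,
        ⟨k - 2, by omega⟩, ⟨k - 2, by omega⟩,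
        Fin.ext ((hmid ⟨k - 2, by omega⟩ rfl).1), Fin.ext ((hmid ⟨k - 2, by omega⟩ rfl).2)⟩
    · obtain ⟨r, cc, hr, hc, hent, hlow, hmid, hhigh⟩ :=
        myKeySub n k hk hn (n + k - 3 - (j : ℕ)) (i : ℕ) (n + k - 3 - (i : ℕ)) (j : ℕ)
          (by omega) (by omega) (by omega) (by omega) (by omega) (by omega) (by omega) (by omega)
      exact ⟨r, cc, hr, hc, fun y x => hent y x,
        ⟨k - 1, by omega⟩, ⟨k - 1, by omega⟩,
        Fin.ext ((hhigh ⟨k - 1, by omega⟩ rfl).1), Fin.ext ((hhigh ⟨k - 1, by omega⟩ rfl).2)⟩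

lemma myOnes (n k : ℕ) (hk : 2 ≤ k) (hn : k ≤ n) :
    onesCount (fun (i j : Fin n) =>
        decide (((i : ℕ) < k - 2 ∧ (i : ℕ) = (j : ℕ)) ∨
          (k - 2 ≤ (i : ℕ) ∧ k - 2 ≤ (j : ℕ) ∧ (i : ℕ) + (j : ℕ) ≠ n + k - 3)))
      = (k - 2) + (n - (k - 2)) * (n - (k - 2) - 1) := by
  rw [onesCount]
  have hfe : ((univ : Finset (Fin n × Fin n)).filter (fun q : Fin n × Fin n =>
      (fun (i j : Fin n) =>
        decide (((i : ℕ) < k - 2 ∧ (i : ℕ) = (j : ℕ)) ∨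
          (k - 2 ≤ (i : ℕ) ∧ k - 2 ≤ (j : ℕ) ∧ (i : ℕ) + (j : ℕ) ≠ n + k - 3))) q.1 q.2 = true))
      = ((univ : Finset (Fin n × Fin n)).filter (fun q =>
        (fun i j : ℕ => (i < k - 2 ∧ i = j) ∨ (k - 2 ≤ i ∧ k - 2 ≤ j ∧ i + j ≠ n + k - 3)) ↑q.1 ↑q.2)) := by
    apply Finset.filter_congr; intro q _; simp
  rw [hfe, myCardProd n (fun i j => (i < k - 2 ∧ i = j) ∨ (k - 2 ≤ i ∧ k - 2 ≤ j ∧ i + j ≠ n + k - 3))]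
  have hrow : ∀ i ∈ range n,
      ((range n).filter (fun j => (i < k - 2 ∧ i = j) ∨ (k - 2 ≤ i ∧ k - 2 ≤ j ∧ i + j ≠ n + k - 3))).card
      = if i < k - 2 then 1 else n - (k - 2) - 1 := by
    intro i hi
    rw [mem_range] at hi
    by_cases hik : i < k - 2
    · rw [if_pos hik]
      have : ((range n).filter (fun j => (i < k - 2 ∧ i = j) ∨ (k - 2 ≤ i ∧ k - 2 ≤ j ∧ i + j ≠ n + k - 3))) = {i} := by
        ext j; simp only [mem_filter, mem_range, mem_singleton]; omega
      rw [this, card_singleton]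
    · rw [if_neg hik]
      have : ((range n).filter (fun j => (i < k - 2 ∧ i = j) ∨ (k - 2 ≤ i ∧ k - 2 ≤ j ∧ i + j ≠ n + k - 3)))
          = (Ico (k - 2) n).erase (n + k - 3 - i) := by
        ext j; simp only [mem_filter, mem_range, mem_erase, mem_Ico]; omega
      rw [this, card_erase_of_mem (by simp only [mem_Ico]; omega), Nat.card_Ico]
  rw [Finset.sum_congr rfl hrow, Finset.sum_ite, Finset.sum_const, Finset.sum_const]
  have e1 : (range n).filter (fun i => i < k - 2) = range (k - 2) := by
    ext i; simp only [mem_filter, mem_range]; omega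
  have e2 : (range n).filter (fun i => ¬ i < k - 2) = Ico (k - 2) n := by
    ext i; simp only [mem_filter, mem_range, mem_Ico]; omega
  rw [e1, e2, card_range, Nat.card_Ico]
  simp [Nat.mul_comm]

theorem stmt18 (n k : ℕ) (hk : 2 ≤ k) (hn : k ≤ n) :
    IsStronglyForcing
      (fun (i j : Fin n) =>
        decide (((i : ℕ) < k - 2 ∧ (i : ℕ) = (j : ℕ)) ∨
          (k - 2 ≤ (i : ℕ) ∧ k - 2 ≤ (j : ℕ) ∧ (i : ℕ) + (j : ℕ) ≠ n + k - 3)))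
      (fun (i j : Fin k) => decide (i = j)) ∧
    (onesCount
      (fun (i j : Fin n) =>
        decide (((i : ℕ) < k - 2 ∧ (i : ℕ) = (j : ℕ)) ∨
          (k - 2 ≤ (i : ℕ) ∧ k - 2 ≤ (j : ℕ) ∧ (i : ℕ) + (j : ℕ) ≠ n + k - 3))) : ℤ) =
      (n : ℤ) ^ 2 - (2 * (k : ℤ) - 3) * n - (2 * k - (k : ℤ) ^ 2) ∧
    (n : ℤ) ^ 2 - (2 * (k : ℤ) - 3) * n - (2 * k - (k : ℤ) ^ 2) ≤
      (MMax n n (fun (i j : Fin k) => decide (i = j)) : ℤ) := by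
  have hones : (onesCount
      (fun (i j : Fin n) =>
        decide (((i : ℕ) < k - 2 ∧ (i : ℕ) = (j : ℕ)) ∨
          (k - 2 ≤ (i : ℕ) ∧ k - 2 ≤ (j : ℕ) ∧ (i : ℕ) + (j : ℕ) ≠ n + k - 3))) : ℤ) =
      (n : ℤ) ^ 2 - (2 * (k : ℤ) - 3) * n - (2 * k - (k : ℤ) ^ 2) := by
    rw [myOnes n k hk hn]
    have c1 : ((k - 2 : ℕ) : ℤ) = (k : ℤ) - 2 := by omega
    have c2 : ((n - (k - 2) : ℕ) : ℤ) = (n : ℤ) - (k : ℤ) + 2 := by omega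
    have c3 : ((n - (k - 2) - 1 : ℕ) : ℤ) = (n : ℤ) - (k : ℤ) + 1 := by omega
    rw [Nat.cast_add, Nat.cast_mul, c1, c2, c3]; ring
  refine ⟨myForcing n k hk hn, hones, ?_⟩
  rw [← hones]
  have hle : onesCount
      (fun (i j : Fin n) =>
        decide (((i : ℕ) < k - 2 ∧ (i : ℕ) = (j : ℕ)) ∨
          (k - 2 ≤ (i : ℕ) ∧ k - 2 ≤ (j : ℕ) ∧ (i : ℕ) + (j : ℕ) ≠ n + k - 3)))
      ≤ MMax n n (fun (i j : Fin k) => decide (i = j)) := by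
    apply le_csSup
    · refine ⟨n * n, ?_⟩
      rintro v ⟨A', _, rfl⟩
      calc onesCount A' ≤ (univ : Finset (Fin n × Fin n)).card := Finset.card_filter_le _ _
        _ = n * n := by simp
    · exact ⟨_, myForcing n k hk hn, rfl⟩
  exact_mod_cast hle
end
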